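/- For any nonempty family 𝔔 of pairwise disjoint subsets of m, the space K_∞(𝔔) is not a premetric compactum of any finite degree, because the zero function is not a Gδ point of K_∞(𝔔). -/

import Mathlib

open Filter Topology

/-- `s` is an initial segment of the branch `x ∈ m^ω`. -/
def PrefixF {m : ℕ} (s : List (Fin m)) (x : ℕ → Fin m) : Prop :=
  ∀ k, (h : k < s.length) → s.get ⟨k, h⟩ = x k

/-- The underlying Polish set `X_𝔔 = m^{<ω} ∪ (m^ω × 𝔔)`. -/
def XQ (m : ℕ) (Q : Set (Set (Fin m))) : Type :=
  List (Fin m) ⊕ ((ℕ → Fin m) × ↥Q)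

open Classical in
/-- The function `g_s : X_𝔔 → {0,1}`: `g_s(t) = 1` iff `t = s`, and `g_s(y,P) = 1` iff
`s⌢ξ` is an initial segment of `y` for some `ξ ∈ P`. -/
noncomputable def gfun (m : ℕ) (Q : Set (Set (Fin m))) (s : List (Fin m)) :
    XQ m Q → Bool := fun z =>
  match z with
  | .inl t => decide (t = s)
  | .inr yP => if ∃ ξ ∈ (yP.2 : Set (Fin m)), PrefixF (s ++ [ξ]) yP.1 then true else false

open Classical in
/-- The indicator function of the singleton `{(x,P)} ⊆ X_𝔔`. -/
noncomputable def gind (m : ℕ) (Q : Set (Set (Fin m))) (x : ℕ → Fin m) (P : ↥Q) :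
    XQ m Q → Bool := fun z => if z = Sum.inr (x, P) then true else false

/-- The zero function on `X_𝔔`. -/
def gzero (m : ℕ) (Q : Set (Set (Fin m))) : XQ m Q → Bool := fun _ => false

/-- `K_∞(𝔔)`: the pointwise closure of `{g_s : s ∈ m^{<ω}}` in `{0,1}^{X_𝔔}`. -/
def Kinf (m : ℕ) (Q : Set (Set (Fin m))) : Set (XQ m Q → Bool) :=
  closure (Set.range (gfun m Q))

universe u

/-- `K` is a premetric compactum of degree at most `n`: there is a continuous surjection
onto a compact metrizable space with all fibers of cardinality at most `n`. -/
def PremetricLE (K : Type u) [TopologicalSpace K] (n : ℕ) : Prop :=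
  ∃ (M : Type u) (tM : TopologicalSpace M) (h : K → M),
    @CompactSpace M tM ∧ @TopologicalSpace.MetrizableSpace M tM ∧
    @Continuous K M _ tM h ∧ Function.Surjective h ∧
    ∀ x : M, Cardinal.mk (h ⁻¹' {x}) ≤ (n : Cardinal)

/-!
Every neighbourhood of the zero function in `{0,1}^{X_𝔔}` constrains only finitely many
coordinates, so a `Gδ` set containing it constrains only countably many. Given countably many
points of `X_𝔔`, diagonalise to get a branch `x` which occurs in none of them and passes through a
fixed `ξ₀ ∈ P₀ ∈ 𝔔` infinitely often. The indicator of `{(x, P₀)}` vanishes at those points and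
lies in `K_∞(𝔔)`: it is the limit of `g_s` along the prefixes `s` of `x` that `x` continues by
`ξ₀`, where disjointness of `𝔔` kills every `(x, P)` with `P ≠ P₀`. Hence zero is not a `Gδ` point of
`K_∞(𝔔)` (and, taking finite sets of points, it does lie in `K_∞(𝔔)`). A compactum of finite
premetric degree has only `Gδ` points, because its fibres over a metrizable space are finite.
-/

open Set

theorem PremetricLE.isGδ_singleton {K : Type u} [TopologicalSpace K] [T1Space K] {n : ℕ}
    (hK : PremetricLE K n) (p : K) : IsGδ {p} := by
  obtain ⟨M, tM, h, -, hM, hh, -, hcard⟩ := hK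
  have hfin : (h ⁻¹' {h p}).Finite :=
    Cardinal.lt_aleph0_iff_set_finite.1 ((hcard _).trans_lt Cardinal.natCast_lt_aleph0)
  have hp : {p} = h ⁻¹' {h p} ∩ (h ⁻¹' {h p} \ {p})ᶜ := by
    ext q
    by_cases hq : q = p <;> simp [hq]
  rw [hp]
  exact ((IsGδ.singleton _).preimage hh).inter hfin.sdiff.isClosed.isOpen_compl.isGδ

theorem exists_iInter_inter_eq_image_of_isGδ {α : Type*} [TopologicalSpace α] {S : Set α}
    {t : Set S} (ht : IsGδ t) :
    ∃ U : ℕ → Set α, (∀ k, IsOpen (U k)) ∧ (⋂ k, U k) ∩ S = (↑) '' t := by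
  obtain ⟨V, hV, rfl⟩ := ht.eq_iInter_nat
  choose U hU hUV using fun k => isOpen_induced_iff.1 (hV k)
  refine ⟨U, hU, ?_⟩
  ext a
  constructor
  · rintro ⟨haU, haS⟩
    exact ⟨⟨a, haS⟩, mem_iInter.2 fun k => hUV k ▸ mem_iInter.1 haU k, rfl⟩
  · rintro ⟨b, hb, rfl⟩
    exact ⟨mem_iInter.2 fun k => (hUV k ▸ mem_iInter.1 hb k : b ∈ Subtype.val ⁻¹' U k), b.2⟩

section Pi

variable {ι Y : Type*} [TopologicalSpace Y]

theorem exists_finset_eqOn_subset_of_isOpen {U : Set (ι → Y)} {f : ι → Y}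
    (hU : IsOpen U) (hf : f ∈ U) : ∃ I : Finset ι, ∀ g, EqOn g f I → g ∈ U := by
  obtain ⟨I, u, hu, hIu⟩ := isOpen_pi_iff.1 hU f hf
  exact ⟨I, fun g hg => hIu fun i hi => hg hi ▸ (hu i hi).2⟩

theorem mem_closure_of_forall_finset_exists_eqOn {S : Set (ι → Y)} {f : ι → Y}
    (h : ∀ I : Finset ι, ∃ g ∈ S, EqOn g f I) : f ∈ closure S := by
  refine mem_closure_iff.2 fun U hU hfU => ?_
  obtain ⟨I, hI⟩ := exists_finset_eqOn_subset_of_isOpen hU hfU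
  obtain ⟨g, hgS, hgf⟩ := h I
  exact ⟨g, hI g hgf, hgS⟩

theorem not_exists_iInter_inter_eq_singleton {K : Set (ι → Y)} {f : ι → Y}
    (h : ∀ C : Set ι, C.Countable → ∃ g ∈ K, g ≠ f ∧ EqOn g f C) :
    ¬ ∃ U : ℕ → Set (ι → Y), (∀ k, IsOpen (U k)) ∧ (⋂ k, U k) ∩ K = {f} := by
  rintro ⟨U, hU, hUK⟩
  have hf : f ∈ (⋂ k, U k) ∩ K := hUK ▸ rfl
  choose I hI using fun k => exists_finset_eqOn_subset_of_isOpen (hU k) (mem_iInter.1 hf.1 k)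
  obtain ⟨g, hgK, hgf, hgC⟩ :=
    h (⋃ k, (I k : Set ι)) (countable_iUnion fun k => (I k).countable_toSet)
  have hg : g ∈ (⋂ k, U k) ∩ K :=
    ⟨mem_iInter.2 fun k => hI k g (hgC.mono (subset_iUnion_of_subset k subset_rfl)), hgK⟩
  exact hgf (hUK ▸ hg : g ∈ ({f} : Set (ι → Y)))

end Pi

theorem exists_frequently_eq_notMem {α : Type*} [Nontrivial α] (a : α) {B : Set (ℕ → α)}
    (hB : B.Countable) : ∃ x : ℕ → α, (∃ᶠ k in atTop, x k = a) ∧ x ∉ B := by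
  obtain ⟨f, hf⟩ := countable_iff_exists_subset_range.1 hB
  choose b hb using fun n k => exists_ne (f n k)
  let x : ℕ → α := fun k => if k % 2 = 0 then a else b (k / 2) k
  refine ⟨x, frequently_atTop.2 fun N => ⟨2 * N, by omega, by simp [x]⟩, fun hx => ?_⟩
  obtain ⟨n, hn⟩ := hf hx
  have hodd : x (2 * n + 1) = b n (2 * n + 1) := by
    simp only [x, if_neg (by omega : (2 * n + 1) % 2 ≠ 0), (by omega : (2 * n + 1) / 2 = n)]
  exact hb n _ (hodd ▸ congrFun hn (2 * n + 1)).symm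

section Kinf

variable {m : ℕ} {Q : Set (Set (Fin m))}

theorem prefixF_ofFn_append_iff (x y : ℕ → Fin m) (K : ℕ) (ξ : Fin m) :
    PrefixF (List.ofFn (fun i : Fin K => x i) ++ [ξ]) y ↔ (∀ k < K, x k = y k) ∧ ξ = y K := by
  simp only [PrefixF, List.length_append, List.length_ofFn, List.length_singleton,
    List.get_eq_getElem, List.getElem_append, List.getElem_ofFn, List.getElem_singleton]
  constructor
  · intro h
    refine ⟨fun k hk => ?_, ?_⟩
    · simpa [hk] using h k (by omega)
    · simpa using h K (by omega)
  · rintro ⟨hlt, hK⟩ k hk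
    split_ifs with h
    · exact hlt k h
    · rwa [show k = K by omega]

theorem gfun_inr_eq_true_iff (s : List (Fin m)) (y : ℕ → Fin m) (P : Q) :
    gfun m Q s (.inr (y, P)) = true ↔ ∃ ξ ∈ (P : Set (Fin m)), PrefixF (s ++ [ξ]) y := by
  simp [gfun]

theorem gind_inr_eq_true_iff (x y : ℕ → Fin m) (P P' : Q) :
    gind m Q x P (.inr (y, P')) = true ↔ y = x ∧ P' = P := by
  have hinr : (Sum.inr (y, P') : XQ m Q) = Sum.inr (x, P) ↔ y = x ∧ P' = P :=
    Sum.inr_injective.eq_iff.trans Prod.ext_iff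
  unfold gind
  split_ifs with h
  · exact iff_of_true rfl (hinr.1 h)
  · exact iff_of_false not_false (mt hinr.2 h)

theorem gfun_ofFn_eventually_eq_gind (hdisj : Q.Pairwise Disjoint) (x : ℕ → Fin m) (P : Q)
    (z : XQ m Q) : ∀ᶠ K in atTop,
      x K ∈ (P : Set (Fin m)) → gfun m Q (List.ofFn fun i : Fin K => x i) z = gind m Q x P z := by
  have hbranch (y : ℕ → Fin m) (P' : Q) : ∀ᶠ K in atTop, x K ∈ (P : Set (Fin m)) →
      gfun m Q (List.ofFn fun i : Fin K => x i) (.inr (y, P')) = gind m Q x P (.inr (y, P')) := by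
    by_cases hy : y = x
    · subst hy
      refine Eventually.of_forall fun K hK => ?_
      rw [Bool.eq_iff_iff, gfun_inr_eq_true_iff, gind_inr_eq_true_iff]
      by_cases hP : P' = P
      · subst hP
        simpa [prefixF_ofFn_append_iff] using hK
      · have hPP' : Disjoint (P : Set (Fin m)) P' :=
          hdisj P.2 P'.2 (fun h => hP (Subtype.ext h).symm)
        simp [prefixF_ofFn_append_iff, hP, hPP'.notMem_of_mem_left hK]
    · obtain ⟨j, hj⟩ := Function.ne_iff.1 hy
      filter_upwards [eventually_gt_atTop j] with K hK _
      rw [Bool.eq_iff_iff, gfun_inr_eq_true_iff, gind_inr_eq_true_iff]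
      simp only [prefixF_ofFn_append_iff, hy, false_and, iff_false]
      exact fun ⟨_, _, hpre, _⟩ => hj (hpre j hK).symm
  rcases z with t | ⟨y, P'⟩
  · filter_upwards [eventually_gt_atTop t.length] with K hK _
    have : t ≠ List.ofFn fun i : Fin K => x i := fun h => by
      simp [h] at hK
    simp [gfun, gind, this]
  · exact hbranch y P'

theorem gind_mem_Kinf (hdisj : Q.Pairwise Disjoint) {x : ℕ → Fin m} {P : Q}
    (hx : ∃ᶠ k in atTop, x k ∈ (P : Set (Fin m))) : gind m Q x P ∈ Kinf m Q := by
  refine mem_closure_of_forall_finset_exists_eqOn fun I => ?_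
  obtain ⟨K, hK, hI⟩ := (hx.and_eventually ((eventually_all_finset I).2
    fun z _ => gfun_ofFn_eventually_eq_gind hdisj x P z)).exists
  exact ⟨_, mem_range_self (List.ofFn fun i : Fin K => x i), fun z hz => hI z hz hK⟩

theorem exists_mem_Kinf_ne_gzero_eqOn (hm : 2 ≤ m) (hdisj : Q.Pairwise Disjoint)
    {P : Set (Fin m)} (hP : P ∈ Q) (hPne : P.Nonempty) {C : Set (XQ m Q)} (hC : C.Countable) :
    ∃ g ∈ Kinf m Q, g ≠ gzero m Q ∧ EqOn g (gzero m Q) C := by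
  have : Nontrivial (Fin m) := Fin.nontrivial_iff_two_le.2 hm
  obtain ⟨a, ha⟩ := hPne
  have hB : (Prod.fst '' (Sum.inr ⁻¹' C : Set ((ℕ → Fin m) × Q))).Countable :=
    (hC.preimage Sum.inr_injective).image _
  obtain ⟨x, hxa, hxB⟩ := exists_frequently_eq_notMem a hB
  refine ⟨gind m Q x ⟨P, hP⟩, gind_mem_Kinf hdisj (hxa.mono fun k hk => hk ▸ ha), fun h => ?_,
    fun z hz => ?_⟩
  · have := (gind_inr_eq_true_iff x x ⟨P, hP⟩ ⟨P, hP⟩).2 ⟨rfl, rfl⟩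
    rw [h] at this
    exact Bool.false_ne_true this
  · have hz' : z ≠ .inr (x, ⟨P, hP⟩) := by
      rintro rfl
      exact hxB ⟨(x, ⟨P, hP⟩), hz, rfl⟩
    simp [gind, gzero, hz']

end Kinf

/-- For `m ≥ 2` and a nonempty family `𝔔` of pairwise disjoint nonempty subsets of `m`,
the zero function belongs to `K_∞(𝔔)` but is not a `Gδ` point of it, and consequently
`K_∞(𝔔)` is not a premetric compactum of any finite degree. -/
theorem Kinf_not_premetric (m : ℕ) (hm : 2 ≤ m) (Q : Set (Set (Fin m)))
    (hQ : Q.Nonempty) (hdisj : Q.Pairwise Disjoint) (hne : ∀ P ∈ Q, P.Nonempty) :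
    gzero m Q ∈ Kinf m Q ∧
    (¬ ∃ U : ℕ → Set (XQ m Q → Bool),
      (∀ k, IsOpen (U k)) ∧ (⋂ k, U k) ∩ Kinf m Q = {gzero m Q}) ∧
    (∀ n : ℕ, ¬ PremetricLE (↥(Kinf m Q)) n) := by
  obtain ⟨P, hP⟩ := hQ
  have hsep (C : Set (XQ m Q)) (hC : C.Countable) :
      ∃ g ∈ Kinf m Q, g ≠ gzero m Q ∧ EqOn g (gzero m Q) C :=
    exists_mem_Kinf_ne_gzero_eqOn hm hdisj hP (hne P hP) hC
  have hzero : gzero m Q ∈ Kinf m Q :=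
    isClosed_closure.closure_subset <| mem_closure_of_forall_finset_exists_eqOn fun I =>
      let ⟨g, hg, _, hgI⟩ := hsep I I.countable_toSet
      ⟨g, hg, hgI⟩
  have hnotGδ := not_exists_iInter_inter_eq_singleton hsep
  refine ⟨hzero, hnotGδ, fun n hK => hnotGδ ?_⟩
  obtain ⟨U, hU, hUK⟩ := exists_iInter_inter_eq_image_of_isGδ (hK.isGδ_singleton ⟨_, hzero⟩)
  exact ⟨U, hU, by rwa [image_singleton] at hUK⟩
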